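/- Let n, d be nonnegative integers, let V ⊆ ℚ^(n+d) and W ⊆ ℤ^(n+d) be finite sets, let P = conv(V) + cone(W), and let R ≥ 0 be an upper bound on the ℓ∞-norm of every element of V and of W. Set R' = (n+d+1)·R, let B = [−R', R']^(n+d), and let Q = P ∩ B. Then P = Q + cone(W) and conv(P ∩ (ℤ^n × ℝ^d)) = conv(Q ∩ (ℤ^n × ℝ^d)) + cone(W). -/

import Mathlib

open Pointwise

/-- The conic hull of a set `W`: all finite nonnegative combinations of elements of `W`. -/
def coneHull {M : Type*} [AddCommMonoid M] [Module ℝ M] (W : Set M) : Set M :=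
  {x | ∃ (s : Finset M) (μ : M → ℝ), ↑s ⊆ W ∧ (∀ w ∈ s, 0 ≤ μ w) ∧ x = ∑ w ∈ s, μ w • w}

/-!
A point of `P` is `v + ∑ μ_w • w` with `v ∈ conv V`; by Carathéodory's theorem for cones the `w`
can be taken linearly independent, so there are at most `n + d` of them. Splitting each `μ_w` into
its integer and fractional parts writes the point as `y + c`, where `c` is a nonnegative integer
combination of `W` and `y ∈ P` has norm at most `(n + d + 1) R`. As `W` is integral, `y` is
mixed-integer whenever the point is; this gives `⊆` in both identities. Conversely, the
mixed-integer points of `P` are stable under adding elements of `W`, so their convex hull is stable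
under adding `t • w` for real `t ≥ 0`, hence under adding `cone W`.
-/

open Finset

section ConeHull

variable {E : Type*} [AddCommGroup E] [Module ℝ E] {W : Set E}

theorem coneHull_subset_of_smul_mem {M : AddSubmonoid E}
    (h : ∀ w ∈ W, ∀ t : ℝ, 0 ≤ t → t • w ∈ M) : coneHull W ⊆ M := by
  rintro _ ⟨s, μ, hsW, hμ, rfl⟩
  exact M.sum_mem fun w hw => h w (hsW hw) (μ w) (hμ w hw)

theorem coneHull_eq_hull (W : Set E) : coneHull W = PointedCone.hull ℝ W := by
  refine (coneHull_subset_of_smul_mem fun w hw t ht => ?_).antisymm fun x hx => ?_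
  · exact Submodule.smul_mem _ (⟨t, ht⟩ : NNReal) (PointedCone.subset_hull hw)
  · obtain ⟨c, hcW, hc, rfl⟩ := PointedCone.mem_hull_set.mp hx
    exact ⟨c.support, c, hcW, fun w _ => hc w, rfl⟩

theorem convex_coneHull : Convex ℝ (coneHull W) := by
  rw [coneHull_eq_hull]
  exact PointedCone.convex _

theorem coneHull_add_coneHull : coneHull W + coneHull W = coneHull W := by
  rw [coneHull_eq_hull]
  exact AddSubmonoid.coe_add_self_eq (PointedCone.hull ℝ W).toAddSubmonoid

theorem subset_coneHull : W ⊆ coneHull W := by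
  rw [coneHull_eq_hull]
  exact PointedCone.subset_hull

theorem AddSubmonoid.closure_subset_coneHull : (AddSubmonoid.closure W : Set E) ⊆ coneHull W := by
  rw [coneHull_eq_hull]
  exact AddSubmonoid.closure_le (S := (PointedCone.hull ℝ W).toAddSubmonoid).mpr
    PointedCone.subset_hull

theorem convexHull_add_coneHull_add_coneHull (V W : Set E) :
    convexHull ℝ V + coneHull W + coneHull W = convexHull ℝ V + coneHull W := by
  rw [add_assoc, coneHull_add_coneHull]

theorem convexHull_add_coneHull_subset {S : Set E} (h : ∀ x ∈ S, ∀ w ∈ W, x + w ∈ S) :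
    convexHull ℝ S + coneHull W ⊆ convexHull ℝ S := by
  have hnsmul (m : ℕ) : ∀ x ∈ S, ∀ w ∈ W, x + m • w ∈ S := by
    induction m with
    | zero => simpa using fun x hx _ _ => hx
    | succ m ih =>
      intro x hx w hw
      rw [succ_nsmul, ← add_assoc]
      exact h _ (ih x hx w hw) w hw
  -- `x + t • w` lies on the segment from `x` to `x + m • w` as soon as `t ≤ m`
  have hray (w : E) (hw : w ∈ W) (t : ℝ) (ht : 0 ≤ t) :
      convexHull ℝ S ⊆ (· + t • w) ⁻¹' convexHull ℝ S := by
    refine convexHull_min (fun x hx => ?_) ((convex_convexHull ℝ S).translate_preimage_left _)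
    set m : ℕ := ⌈t⌉₊ + 1
    have hm : 0 < (m : ℝ) := by positivity
    have htm : t ≤ m := by simp only [m]; push_cast; linarith [Nat.le_ceil t]
    have hx' : x + (m : ℝ) • w ∈ convexHull ℝ S := by
      rw [Nat.cast_smul_eq_nsmul]; exact subset_convexHull ℝ S (hnsmul m x hx w hw)
    have hseg := (convex_convexHull ℝ S).add_smul_mem (subset_convexHull ℝ S hx) hx'
      (t := t / m) ⟨by positivity, (div_le_one hm).mpr htm⟩
    rwa [smul_smul, div_mul_cancel₀ t hm.ne'] at hseg
  let M : AddSubmonoid E :=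
    { carrier := {u | ∀ x ∈ convexHull ℝ S, x + u ∈ convexHull ℝ S}
      add_mem' := fun hu hv x hx => by rw [← add_assoc]; exact hv _ (hu x hx)
      zero_mem' := fun x hx => by rwa [add_zero] }
  rintro _ ⟨x, hx, u, hu, rfl⟩
  exact coneHull_subset_of_smul_mem (M := M) hray hu x hx

end ConeHull

section Caratheodory

variable {E : Type*} [AddCommGroup E] [Module ℝ E]

theorem exists_pos_sum_smul_eq_zero_of_not_linearIndepOn {s : Finset E}
    (hs : ¬LinearIndepOn ℝ id (s : Set E)) :
    ∃ g : E → ℝ, ∑ w ∈ s, g w • w = 0 ∧ ∃ w ∈ s, 0 < g w := by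
  obtain ⟨g, hg, w, hw, hgw⟩ := not_linearIndepOn_finset_iff.mp hs
  rcases hgw.lt_or_gt with hneg | hpos
  · exact ⟨-g, by simpa [neg_smul, sum_neg_distrib] using hg, w, hw, by simpa using hneg⟩
  · exact ⟨g, hg, w, hw, hpos⟩

theorem exists_sum_erase_smul_eq_of_not_linearIndepOn [DecidableEq E] {s : Finset E}
    (hs : ¬LinearIndepOn ℝ id (s : Set E)) {μ : E → ℝ} (hμ : ∀ w ∈ s, 0 ≤ μ w) :
    ∃ w₀ ∈ s, ∃ ν : E → ℝ, (∀ w ∈ s.erase w₀, 0 ≤ ν w) ∧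
      ∑ w ∈ s.erase w₀, ν w • w = ∑ w ∈ s, μ w • w := by
  obtain ⟨g, hg, hpos⟩ := exists_pos_sum_smul_eq_zero_of_not_linearIndepOn hs
  -- subtract the largest multiple of the relation `g` that keeps all coefficients nonnegative
  obtain ⟨w₀, hw₀, hmin⟩ := (s.filter (0 < g ·)).exists_min_image (fun w => μ w / g w)
    (by simpa [Finset.filter_nonempty_iff] using hpos)
  rw [mem_filter] at hw₀
  set t := μ w₀ / g w₀
  have ht : 0 ≤ t := div_nonneg (hμ _ hw₀.1) hw₀.2.le
  refine ⟨w₀, hw₀.1, fun w => μ w - t * g w, fun w hw => ?_, ?_⟩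
  · have hws := mem_of_mem_erase hw
    rw [sub_nonneg]
    rcases le_or_gt (g w) 0 with hgw | hgw
    · nlinarith [hμ w hws]
    · exact (le_div_iff₀ hgw).mp (hmin w (mem_filter.mpr ⟨hws, hgw⟩))
  · rw [sum_erase _ (by simp only [t, div_mul_cancel₀ _ hw₀.2.ne', sub_self, zero_smul])]
    simp only [sub_smul, mul_smul, sum_sub_distrib, ← smul_sum, hg, smul_zero, sub_zero]

theorem exists_linearIndepOn_of_mem_coneHull {W : Set E} {x : E} (hx : x ∈ coneHull W) :
    ∃ t : Finset E, ↑t ⊆ W ∧ LinearIndepOn ℝ id (t : Set E) ∧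
      ∃ μ : E → ℝ, (∀ w ∈ t, 0 ≤ μ w) ∧ x = ∑ w ∈ t, μ w • w := by
  classical
  obtain ⟨s, μ, hsW, hμ, rfl⟩ := hx
  induction s using Finset.strongInduction generalizing μ with
  | H s ih =>
    by_cases hs : LinearIndepOn ℝ id (s : Set E)
    · exact ⟨s, hsW, hs, μ, hμ, rfl⟩
    obtain ⟨w₀, hw₀, ν, hν, hsum⟩ := exists_sum_erase_smul_eq_of_not_linearIndepOn hs hμ
    rw [← hsum]
    exact ih _ (erase_ssubset hw₀) ν ((coe_subset.mpr (erase_subset _ _)).trans hsW) hν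

end Caratheodory

section Bounded

open Metric Module Set

variable {E : Type*} [NormedAddCommGroup E] [NormedSpace ℝ E] [FiniteDimensional ℝ E]
  {V W : Set E} {R : ℝ}

theorem exists_norm_le_add_mem_closure_of_mem_convexHull_add_coneHull
    (hV : V ⊆ closedBall 0 R) (hW : W ⊆ closedBall 0 R) {x : E}
    (hx : x ∈ convexHull ℝ V + coneHull W) :
    ∃ y ∈ convexHull ℝ V + coneHull W, ‖y‖ ≤ (finrank ℝ E + 1) * R ∧
      ∃ c ∈ AddSubmonoid.closure W, x = y + c := by
  obtain ⟨v, hv, c, hc, rfl⟩ := hx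
  obtain ⟨t, htW, hti, μ, hμ, rfl⟩ := exists_linearIndepOn_of_mem_coneHull hc
  have hvR : ‖v‖ ≤ R := mem_closedBall_zero_iff.mp (convexHull_min hV (convex_closedBall 0 R) hv)
  set y := v + ∑ w ∈ t, (μ w - ⌊μ w⌋₊) • w
  have hfract : ∑ w ∈ t, (μ w - ⌊μ w⌋₊) • w ∈ coneHull W :=
    ⟨t, _, htW, fun w hw => sub_nonneg.mpr (Nat.floor_le (hμ w hw)), rfl⟩
  have hfloor : ∑ w ∈ t, ⌊μ w⌋₊ • w ∈ AddSubmonoid.closure W :=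
    sum_mem fun w hw => nsmul_mem (AddSubmonoid.subset_closure (htW hw)) _
  have hyR : ‖y‖ ≤ (finrank ℝ E + 1) * R := by
    have hcard : (t.card : ℝ) ≤ finrank ℝ E := by exact_mod_cast hti.finset_card_le_finrank
    have hterm : ∀ w ∈ t, ‖(μ w - ⌊μ w⌋₊) • w‖ ≤ R := fun w hw => by
      rw [norm_smul, Real.norm_of_nonneg (sub_nonneg.mpr (Nat.floor_le (hμ w hw)))]
      exact (mul_le_of_le_one_left (norm_nonneg w) (by linarith [Nat.lt_floor_add_one (μ w)])).trans
        (mem_closedBall_zero_iff.mp (hW (htW hw)))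
    calc ‖y‖ ≤ ‖v‖ + ∑ w ∈ t, ‖(μ w - ⌊μ w⌋₊) • w‖ :=
          (norm_add_le _ _).trans (by gcongr; exact norm_sum_le _ _)
      _ ≤ R + t.card * R := by gcongr; simpa using sum_le_sum hterm
      _ ≤ (finrank ℝ E + 1) * R := by nlinarith [(norm_nonneg v).trans hvR]
  refine ⟨y, add_mem_add hv hfract, hyR, _, hfloor, ?_⟩
  rw [add_assoc, ← sum_add_distrib]
  refine congrArg _ (sum_congr rfl fun w _ => ?_)
  rw [← Nat.cast_smul_eq_nsmul ℝ, ← add_smul, sub_add_cancel]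

theorem convexHull_add_coneHull_eq_inter_closedBall_add
    (hV : V ⊆ closedBall 0 R) (hW : W ⊆ closedBall 0 R) :
    convexHull ℝ V + coneHull W =
      (convexHull ℝ V + coneHull W) ∩ closedBall 0 ((finrank ℝ E + 1) * R) + coneHull W := by
  refine subset_antisymm (fun x hx => ?_) ?_
  · obtain ⟨y, hy, hyR, c, hc, rfl⟩ :=
      exists_norm_le_add_mem_closure_of_mem_convexHull_add_coneHull hV hW hx
    exact add_mem_add ⟨hy, mem_closedBall_zero_iff.mpr hyR⟩
      (AddSubmonoid.closure_subset_coneHull hc)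
  · calc _ ⊆ convexHull ℝ V + coneHull W + coneHull W := add_subset_add_right inter_subset_left
      _ = _ := convexHull_add_coneHull_add_coneHull V W

theorem convexHull_inter_addSubgroup_eq
    (hV : V ⊆ closedBall 0 R) (hW : W ⊆ closedBall 0 R) {G : AddSubgroup E} (hWG : W ⊆ G) :
    convexHull ℝ ((convexHull ℝ V + coneHull W) ∩ G) =
      convexHull ℝ ((convexHull ℝ V + coneHull W) ∩ closedBall 0 ((finrank ℝ E + 1) * R) ∩ G) +
        coneHull W := by
  set P := convexHull ℝ V + coneHull W
  refine subset_antisymm (convexHull_min ?_ ((convex_convexHull ℝ _).add convex_coneHull)) ?_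
  · rintro x ⟨hxP, hxG⟩
    obtain ⟨y, hy, hyR, c, hc, rfl⟩ :=
      exists_norm_le_add_mem_closure_of_mem_convexHull_add_coneHull hV hW hxP
    have hcG : c ∈ G := AddSubmonoid.closure_le (S := G.toAddSubmonoid) |>.mpr hWG hc
    refine add_mem_add (subset_convexHull ℝ _ ⟨⟨hy, mem_closedBall_zero_iff.mpr hyR⟩, ?_⟩)
      (AddSubmonoid.closure_subset_coneHull hc)
    exact (G.add_mem_cancel_right hcG).mp hxG
  · calc _ ⊆ convexHull ℝ (P ∩ G) + coneHull W :=
          add_subset_add_right (convexHull_mono (inter_subset_inter_left _ inter_subset_left))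
      _ ⊆ _ := convexHull_add_coneHull_subset fun x ⟨hxP, hxG⟩ w hw =>
          ⟨(convexHull_add_coneHull_add_coneHull V W).subset (add_mem_add hxP (subset_coneHull hw)),
            G.add_mem hxG (hWG hw)⟩

end Bounded

def fstIntegralAddSubgroup (ι F : Type*) [AddGroup F] : AddSubgroup ((ι → ℝ) × F) where
  carrier := {p | ∀ i, ∃ z : ℤ, p.1 i = z}
  add_mem' ha hb i := by
    obtain ⟨a, ha⟩ := ha i
    obtain ⟨b, hb⟩ := hb i
    exact ⟨a + b, by simp [ha, hb]⟩
  zero_mem' _ := ⟨0, by simp⟩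
  neg_mem' ha i := by
    obtain ⟨a, ha⟩ := ha i
    exact ⟨-a, by simp [ha]⟩

theorem norm_prod_pi_le_iff {ι κ : Type*} [Fintype ι] [Fintype κ] {p : (ι → ℝ) × (κ → ℝ)} {r : ℝ}
    (hr : 0 ≤ r) : ‖p‖ ≤ r ↔ (∀ i, |p.1 i| ≤ r) ∧ ∀ j, |p.2 j| ≤ r := by
  simp only [Prod.norm_def, max_le_iff, pi_norm_le_iff_of_nonneg hr, Real.norm_eq_abs]

theorem reduction_to_bounded_polyhedron_general (n d : ℕ)
    (W : Finset ((Fin n → ℤ) × (Fin d → ℤ)))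
    (VR WR : Set ((Fin n → ℝ) × (Fin d → ℝ)))
    (hWR : WR = (fun (w : (Fin n → ℤ) × (Fin d → ℤ)) =>
      ((fun i => ((w.1 i : ℝ))), fun j => ((w.2 j : ℝ)))) '' ↑W)
    (P MI : Set ((Fin n → ℝ) × (Fin d → ℝ)))
    (hP : P = convexHull ℝ VR + coneHull WR)
    (hMI : MI = {p | ∀ i, ∃ z : ℤ, p.1 i = (z : ℝ)})
    (R : ℝ) (hR : 0 ≤ R)
    (hRV : ∀ v ∈ VR, (∀ i, |v.1 i| ≤ R) ∧ (∀ j, |v.2 j| ≤ R))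
    (hRW : ∀ w ∈ WR, (∀ i, |w.1 i| ≤ R) ∧ (∀ j, |w.2 j| ≤ R))
    (R' : ℝ) (hR' : R' = ((n + d + 1 : ℕ) : ℝ) * R)
    (B Q : Set ((Fin n → ℝ) × (Fin d → ℝ)))
    (hB : B = {p | (∀ i, -R' ≤ p.1 i ∧ p.1 i ≤ R') ∧ (∀ j, -R' ≤ p.2 j ∧ p.2 j ≤ R')})
    (hQ : Q = P ∩ B) :
    P = Q + coneHull WR ∧
    convexHull ℝ (P ∩ MI) = convexHull ℝ (Q ∩ MI) + coneHull WR := by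
  have hVball : VR ⊆ Metric.closedBall 0 R := fun v hv =>
    mem_closedBall_zero_iff.mpr ((norm_prod_pi_le_iff hR).mpr (hRV v hv))
  have hWball : WR ⊆ Metric.closedBall 0 R := fun w hw =>
    mem_closedBall_zero_iff.mpr ((norm_prod_pi_le_iff hR).mpr (hRW w hw))
  have hWG : WR ⊆ fstIntegralAddSubgroup (Fin n) (Fin d → ℝ) := by
    rw [hWR]
    rintro _ ⟨w, -, rfl⟩ i
    exact ⟨w.1 i, rfl⟩
  have hR'eq : (Module.finrank ℝ ((Fin n → ℝ) × (Fin d → ℝ)) + 1 : ℝ) * R = R' := by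
    simp [hR']
  have hB' : B = Metric.closedBall 0 R' := by
    ext p
    have hR'0 : 0 ≤ R' := by rw [hR']; positivity
    rw [hB, mem_closedBall_zero_iff, norm_prod_pi_le_iff hR'0]
    simp only [abs_le, Set.mem_ofPred_eq]
  subst hP hQ hMI
  rw [hB', ← hR'eq]
  exact ⟨convexHull_add_coneHull_eq_inter_closedBall_add hVball hWball,
    convexHull_inter_addSubgroup_eq hVball hWball hWG⟩

theorem reduction_to_bounded_polyhedron (n d : ℕ)
    (V : Finset ((Fin n → ℚ) × (Fin d → ℚ)))
    (W : Finset ((Fin n → ℤ) × (Fin d → ℤ)))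
    (VR WR : Set ((Fin n → ℝ) × (Fin d → ℝ)))
    (hVR : VR = (fun (v : (Fin n → ℚ) × (Fin d → ℚ)) =>
      ((fun i => ((v.1 i : ℝ))), fun j => ((v.2 j : ℝ)))) '' ↑V)
    (hWR : WR = (fun (w : (Fin n → ℤ) × (Fin d → ℤ)) =>
      ((fun i => ((w.1 i : ℝ))), fun j => ((w.2 j : ℝ)))) '' ↑W)
    (P MI : Set ((Fin n → ℝ) × (Fin d → ℝ)))
    (hP : P = convexHull ℝ VR + coneHull WR)
    (hMI : MI = {p | ∀ i, ∃ z : ℤ, p.1 i = (z : ℝ)})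
    (R : ℝ) (hR : 0 ≤ R)
    (hRV : ∀ v ∈ VR, (∀ i, |v.1 i| ≤ R) ∧ (∀ j, |v.2 j| ≤ R))
    (hRW : ∀ w ∈ WR, (∀ i, |w.1 i| ≤ R) ∧ (∀ j, |w.2 j| ≤ R))
    (R' : ℝ) (hR' : R' = ((n + d + 1 : ℕ) : ℝ) * R)
    (B Q : Set ((Fin n → ℝ) × (Fin d → ℝ)))
    (hB : B = {p | (∀ i, -R' ≤ p.1 i ∧ p.1 i ≤ R') ∧ (∀ j, -R' ≤ p.2 j ∧ p.2 j ≤ R')})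
    (hQ : Q = P ∩ B) :
    P = Q + coneHull WR ∧
    convexHull ℝ (P ∩ MI) = convexHull ℝ (Q ∩ MI) + coneHull WR :=
  reduction_to_bounded_polyhedron_general n d W VR WR hWR P MI hP hMI R hR hRV hRW R' hR' B Q hB hQ
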